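/- Let q, r be quaternions with Re(q) > 0 and Re(r) > 0. Then the quaternion D(q,r) = ‖q‖² + 2 Re(q) conj(r) + (conj r)² is nonzero, and the Laplacian in q of K(q,r) = (conj(q)² + 2 conj(q) conj(r) + (conj r)²) · D(q,r)^{−2} satisfies Δ_q K(q,r) = −4 [ D(q,r)^{−1} + 2 K(q,r) ] · D(q,r)^{−1} (this is the Bergman–Fueter kernel identity for the quaternionic half space). -/

import Mathlib

open Quaternion

noncomputable section

/-- The imaginary unit `i` of the quaternions. -/
def qI : ℍ[ℝ] := ⟨0, 1, 0, 0⟩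

/-- The imaginary unit `j` of the quaternions. -/
def qJ : ℍ[ℝ] := ⟨0, 0, 1, 0⟩

/-- The imaginary unit `k` of the quaternions. -/
def qK : ℍ[ℝ] := ⟨0, 0, 0, 1⟩

/-- Directional (partial) derivative of `f : ℍ → ℍ` along the direction `v`, at `q`. -/
def dd (v : ℍ[ℝ]) (f : ℍ[ℝ] → ℍ[ℝ]) (q : ℍ[ℝ]) : ℍ[ℝ] := fderiv ℝ f q v

/-- The Cauchy–Fueter operator `∂f = ∂_{x₀}f + i ∂_{x₁}f + j ∂_{x₂}f + k ∂_{x₃}f`. -/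
def CF (f : ℍ[ℝ] → ℍ[ℝ]) (q : ℍ[ℝ]) : ℍ[ℝ] :=
  dd 1 f q + qI * dd qI f q + qJ * dd qJ f q + qK * dd qK f q

/-- The conjugate Cauchy–Fueter operator `∂̄f = ∂_{x₀}f − i ∂_{x₁}f − j ∂_{x₂}f − k ∂_{x₃}f`. -/
def CFbar (f : ℍ[ℝ] → ℍ[ℝ]) (q : ℍ[ℝ]) : ℍ[ℝ] :=
  dd 1 f q - qI * dd qI f q - qJ * dd qJ f q - qK * dd qK f q

/-- The Laplacian `Δf = ∂²_{x₀}f + ∂²_{x₁}f + ∂²_{x₂}f + ∂²_{x₃}f` on `ℍ ≅ ℝ⁴`. -/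
def lap (f : ℍ[ℝ] → ℍ[ℝ]) (q : ℍ[ℝ]) : ℍ[ℝ] :=
  dd 1 (dd 1 f) q + dd qI (dd qI f) q + dd qJ (dd qJ f) q + dd qK (dd qK f) q

/-- `D(q,r) = ‖q‖² + 2 Re(q) conj r + (conj r)²` (as a function of `q` for fixed `r`). -/
def D (r w : ℍ[ℝ]) : ℍ[ℝ] :=
  ((‖w‖ ^ 2 : ℝ) : ℍ[ℝ]) + 2 * (w.re : ℍ[ℝ]) * star r + (star r) ^ 2

/-- The slice Bergman kernel of the quaternionic half space,
`K(q,r) = (conj(q)² + 2 conj(q) conj(r) + (conj r)²) · D(q,r)^{−2}`. -/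
def Khalf (r w : ℍ[ℝ]) : ℍ[ℝ] :=
  ((star w) ^ 2 + 2 * star w * star r + (star r) ^ 2) * ((D r w) ^ 2)⁻¹

/-! ### Auxiliary development -/

/-- `star` as a continuous linear map on the quaternions. -/
def sCLM : ℍ[ℝ] →L[ℝ] ℍ[ℝ] :=
  { toFun := star, map_add' := star_add,
    map_smul' := fun c a => by simp [Quaternion.star_smul]
    cont := by
      show Continuous (star : ℍ[ℝ] → ℍ[ℝ])
      have h : (star : ℍ[ℝ] → ℍ[ℝ]) = fun a => ((2*a.re : ℝ) : ℍ[ℝ]) - a :=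
        funext fun a => a.star_eq_two_re_sub
      have h2 : Continuous (fun a : ℍ[ℝ] => ((2*a.re : ℝ) : ℍ[ℝ]) - a) :=
        (Quaternion.continuous_coe.comp (continuous_const.mul Quaternion.continuous_re)).sub
          continuous_id
      exact h ▸ h2 }

lemma sCLM_apply (a : ℍ[ℝ]) : sCLM a = star a := rfl

lemma diff_star : Differentiable ℝ (star : ℍ[ℝ] → ℍ[ℝ]) := sCLM.differentiable

/-- The polynomial form of `D`. -/
def Pf (r w : ℍ[ℝ]) : ℍ[ℝ] := w * star w + (w + star w) * star r + star r * star r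

/-- Numerator of the kernel. -/
def Nf (r w : ℍ[ℝ]) : ℍ[ℝ] := star w * star w + 2 * (star w * star r) + star r * star r

def Bf (r w : ℍ[ℝ]) : ℍ[ℝ] := (Pf r w)⁻¹

def Pd (r v w : ℍ[ℝ]) : ℍ[ℝ] := v * star w + w * star v + (v + star v) * star r

def Nd (r v w : ℍ[ℝ]) : ℍ[ℝ] := star v * star w + star w * star v + 2 * (star v * star r)

def Gd (r v w : ℍ[ℝ]) : ℍ[ℝ] := -(Bf r w * Pd r v w * Bf r w)

def Kd (r v w : ℍ[ℝ]) : ℍ[ℝ] :=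
  Nd r v w * (Bf r w * Bf r w) + Nf r w * (Gd r v w * Bf r w + Bf r w * Gd r v w)

lemma normcoe (w : ℍ[ℝ]) : ((‖w‖^2 : ℝ) : ℍ[ℝ]) = w * star w := by
  have h : ‖w‖^2 = normSq w := by rw [sq, Quaternion.normSq_eq_norm_mul_self]
  rw [h, ← Quaternion.self_mul_star]

lemma D_eq_P (r w : ℍ[ℝ]) : D r w = Pf r w := by
  rw [D, Pf, normcoe, ← Quaternion.self_add_star, sq]

lemma Khalf_eq (r : ℍ[ℝ]) : Khalf r = fun w => Nf r w * (Bf r w * Bf r w) := by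
  funext w
  rw [Khalf, D_eq_P, Bf, Nf]
  rw [show (Pf r w ^ 2) = Pf r w * Pf r w from sq (Pf r w), mul_inv_rev]
  congr 1
  rw [sq, sq, mul_assoc]


lemma hline (w v : ℍ[ℝ]) : HasDerivAt (fun t : ℝ => w + t • v) v 0 := by
  simpa using ((hasDerivAt_id (0:ℝ)).smul_const v).const_add w

lemma h0eq (w v : ℍ[ℝ]) : w + (0:ℝ) • v = w := by simp

lemma hstar (w v : ℍ[ℝ]) : HasDerivAt (fun t : ℝ => star (w + t • v)) (star v) 0 := by
  have h := sCLM.hasFDerivAt.comp_hasDerivAt 0 (hline w v)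
  simpa [Function.comp_def, sCLM_apply] using h

lemma hPf (r w v : ℍ[ℝ]) : HasDerivAt (fun t : ℝ => Pf r (w + t • v)) (Pd r v w) 0 := by
  have h := (((hline w v).mul (hstar w v)).add
      (((hline w v).add (hstar w v)).mul_const (star r))).add
      (hasDerivAt_const (0:ℝ) (star r * star r))
  rw [Pd]
  simpa [Pf, h0eq, Pi.add_def, Pi.mul_def] using h

lemma hNf (r w v : ℍ[ℝ]) : HasDerivAt (fun t : ℝ => Nf r (w + t • v)) (Nd r v w) 0 := by
  have h := (((hstar w v).mul (hstar w v)).add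
      (((hstar w v).mul_const (star r)).const_mul (2:ℍ[ℝ]))).add
      (hasDerivAt_const (0:ℝ) (star r * star r))
  rw [Nd]
  simpa [Nf, h0eq, Pi.add_def, Pi.mul_def] using h

lemma hBf (r w v : ℍ[ℝ]) (hw : Pf r w ≠ 0) :
    HasDerivAt (fun t : ℝ => Bf r (w + t • v)) (Gd r v w) 0 := by
  have hu := hasFDerivAt_ringInverse (𝕜 := ℝ) (Units.mk0 _ hw)
  rw [show ((Units.mk0 _ hw : ℍ[ℝ]ˣ) : ℍ[ℝ]) = Pf r (w + (0:ℝ) • v) from by rw [h0eq]; rfl] at hu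
  have h3 := hu.comp_hasDerivAt 0 (hPf r w v)
  rw [Gd, Bf]
  simpa [Function.comp_def, Ring.inverse_eq_inv', Bf, h0eq] using h3

lemma hKf (r w v : ℍ[ℝ]) (hw : Pf r w ≠ 0) :
    HasDerivAt (fun t : ℝ => Khalf r (w + t • v)) (Kd r v w) 0 := by
  have h := (hNf r w v).mul ((hBf r w v hw).mul (hBf r w v hw))
  rw [Khalf_eq, Kd]
  simpa [h0eq, Pi.add_def, Pi.mul_def] using h

def Pdd (v : ℍ[ℝ]) : ℍ[ℝ] := v * star v + v * star v

def Ndd (v : ℍ[ℝ]) : ℍ[ℝ] := star v * star v + star v * star v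

def Gdd (r v w : ℍ[ℝ]) : ℍ[ℝ] :=
  -((Gd r v w * Pd r v w + Bf r w * Pdd v) * Bf r w + (Bf r w * Pd r v w) * Gd r v w)

def Kdd (r v w : ℍ[ℝ]) : ℍ[ℝ] :=
  Ndd v * (Bf r w * Bf r w) + Nd r v w * (Gd r v w * Bf r w + Bf r w * Gd r v w) +
    (Nd r v w * (Gd r v w * Bf r w + Bf r w * Gd r v w) +
      Nf r w * ((Gdd r v w * Bf r w + Gd r v w * Gd r v w) +
        (Gd r v w * Gd r v w + Bf r w * Gdd r v w)))

lemma hPd (r w v : ℍ[ℝ]) : HasDerivAt (fun t : ℝ => Pd r v (w + t • v)) (Pdd v) 0 := by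
  have h := ((((hstar w v).const_mul v).add ((hline w v).mul_const (star v))).add
      (hasDerivAt_const (0:ℝ) ((v + star v) * star r)))
  rw [Pdd]
  simpa [Pd, h0eq, Pi.add_def, Pi.mul_def] using h

lemma hNd (r w v : ℍ[ℝ]) : HasDerivAt (fun t : ℝ => Nd r v (w + t • v)) (Ndd v) 0 := by
  have h := ((((hstar w v).const_mul (star v)).add ((hstar w v).mul_const (star v))).add
      (hasDerivAt_const (0:ℝ) (2 * (star v * star r))))
  rw [Ndd]
  simpa [Nd, h0eq, Pi.add_def, Pi.mul_def] using h

lemma hGd (r w v : ℍ[ℝ]) (hw : Pf r w ≠ 0) :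
    HasDerivAt (fun t : ℝ => Gd r v (w + t • v)) (Gdd r v w) 0 := by
  have h := (((hBf r w v hw).mul (hPd r w v)).mul (hBf r w v hw)).neg
  rw [Gdd]
  simpa [Gd, h0eq, Pi.add_def, Pi.mul_def, Pi.neg_def] using h

lemma hKd (r w v : ℍ[ℝ]) (hw : Pf r w ≠ 0) :
    HasDerivAt (fun t : ℝ => Kd r v (w + t • v)) (Kdd r v w) 0 := by
  have h := ((hNd r w v).mul ((hBf r w v hw).mul (hBf r w v hw))).add
      ((hNf r w v).mul (((hGd r w v hw).mul (hBf r w v hw)).add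
        ((hBf r w v hw).mul (hGd r w v hw))))
  rw [Kdd]
  simpa [Kd, h0eq, Pi.add_def, Pi.mul_def] using h

lemma contPf (r : ℍ[ℝ]) : Continuous (Pf r) := by
  unfold Pf
  exact ((continuous_id.mul sCLM.continuous).add
    ((continuous_id.add sCLM.continuous).mul continuous_const)).add continuous_const

lemma diffPf (r : ℍ[ℝ]) : Differentiable ℝ (Pf r) := by
  unfold Pf
  exact ((differentiable_id.mul diff_star).add
    ((differentiable_id.add diff_star).mul (differentiable_const _))).add (differentiable_const _)

lemma diffNf (r : ℍ[ℝ]) : Differentiable ℝ (Nf r) := by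
  unfold Nf
  exact ((diff_star.mul diff_star).add
    (((diff_star.mul (differentiable_const _))).const_mul _)).add (differentiable_const _)

lemma diffPd (r v : ℍ[ℝ]) : Differentiable ℝ (Pd r v) := by
  unfold Pd
  exact (((diff_star.const_mul _)).add (differentiable_id.mul (differentiable_const _))).add
    (differentiable_const _)

lemma diffNd (r v : ℍ[ℝ]) : Differentiable ℝ (Nd r v) := by
  unfold Nd
  exact (((diff_star.const_mul _)).add (diff_star.mul (differentiable_const _))).add
    (differentiable_const _)

lemma diffBf (r w : ℍ[ℝ]) (hw : Pf r w ≠ 0) : DifferentiableAt ℝ (Bf r) w := by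
  have h : Bf r = fun w => Ring.inverse (Pf r w) := by
    funext u; rw [Bf, Ring.inverse_eq_inv']
  rw [h]
  exact (differentiableAt_inverse (isUnit_iff_ne_zero.2 hw)).comp w ((diffPf r) w)

lemma diffGd (r v w : ℍ[ℝ]) (hw : Pf r w ≠ 0) : DifferentiableAt ℝ (Gd r v) w := by
  unfold Gd
  exact (((diffBf r w hw).mul ((diffPd r v) w)).mul (diffBf r w hw)).neg

lemma diffKhalf (r w : ℍ[ℝ]) (hw : Pf r w ≠ 0) : DifferentiableAt ℝ (Khalf r) w := by
  rw [Khalf_eq]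
  exact ((diffNf r) w).mul ((diffBf r w hw).mul (diffBf r w hw))

lemma diffKd (r v w : ℍ[ℝ]) (hw : Pf r w ≠ 0) : DifferentiableAt ℝ (Kd r v) w := by
  unfold Kd
  exact (((diffNd r v) w).mul ((diffBf r w hw).mul (diffBf r w hw))).add
    (((diffNf r) w).mul (((diffGd r v w hw).mul (diffBf r w hw)).add
      ((diffBf r w hw).mul (diffGd r v w hw))))

lemma dd_eq {f : ℍ[ℝ] → ℍ[ℝ]} {w v L : ℍ[ℝ]} (hf : DifferentiableAt ℝ f w)
    (h : HasDerivAt (fun t : ℝ => f (w + t • v)) L 0) : dd v f w = L := by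
  have hf2 : HasFDerivAt f (fderiv ℝ f w) (w + (0:ℝ) • v) := by
    rw [h0eq]; exact hf.hasFDerivAt
  have h2 := hf2.comp_hasDerivAt 0 (hline w v)
  have h3 : fderiv ℝ f w v = L := h2.unique h
  rw [dd, h3]

lemma dd_K (r v w : ℍ[ℝ]) (hw : Pf r w ≠ 0) : dd v (Khalf r) w = Kd r v w :=
  dd_eq (diffKhalf r w hw) (hKf r w v hw)

lemma dd_dd_K (r v q : ℍ[ℝ]) (hq : Pf r q ≠ 0) : dd v (dd v (Khalf r)) q = Kdd r v q := by
  have hU : IsOpen {w : ℍ[ℝ] | Pf r w ≠ 0} :=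
    isOpen_compl_singleton.preimage (contPf r)
  have hev : dd v (Khalf r) =ᶠ[nhds q] Kd r v :=
    Filter.eventuallyEq_of_mem (hU.mem_nhds hq) (fun w hw => dd_K r v w hw)
  have h1 : dd v (dd v (Khalf r)) q = dd v (Kd r v) q := by
    rw [dd, dd, hev.fderiv_eq]
  rw [h1]
  exact dd_eq (diffKd r v q hq) (hKd r q v hq)

/-! ### Component lemmas for numerals -/

lemma two_re' : (2 : ℍ[ℝ]).re = 2 := by
  rw [show (2:ℍ[ℝ]) = ((2:ℕ):ℍ[ℝ]) by norm_num, Quaternion.re_natCast]; norm_num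
lemma two_imI' : (2 : ℍ[ℝ]).imI = 0 := by
  rw [show (2:ℍ[ℝ]) = ((2:ℕ):ℍ[ℝ]) by norm_num, Quaternion.imI_natCast]
lemma two_imJ' : (2 : ℍ[ℝ]).imJ = 0 := by
  rw [show (2:ℍ[ℝ]) = ((2:ℕ):ℍ[ℝ]) by norm_num, Quaternion.imJ_natCast]
lemma two_imK' : (2 : ℍ[ℝ]).imK = 0 := by
  rw [show (2:ℍ[ℝ]) = ((2:ℕ):ℍ[ℝ]) by norm_num, Quaternion.imK_natCast]
lemma four_re' : (4 : ℍ[ℝ]).re = 4 := by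
  rw [show (4:ℍ[ℝ]) = ((4:ℕ):ℍ[ℝ]) by norm_num, Quaternion.re_natCast]; norm_num
lemma four_imI' : (4 : ℍ[ℝ]).imI = 0 := by
  rw [show (4:ℍ[ℝ]) = ((4:ℕ):ℍ[ℝ]) by norm_num, Quaternion.imI_natCast]
lemma four_imJ' : (4 : ℍ[ℝ]).imJ = 0 := by
  rw [show (4:ℍ[ℝ]) = ((4:ℕ):ℍ[ℝ]) by norm_num, Quaternion.imJ_natCast]
lemma four_imK' : (4 : ℍ[ℝ]).imK = 0 := by
  rw [show (4:ℍ[ℝ]) = ((4:ℕ):ℍ[ℝ]) by norm_num, Quaternion.imK_natCast]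

/-! ### Polynomial identities -/

section polyid

set_option maxHeartbeats 2000000

lemma Pf_ne_zero (q r : ℍ[ℝ]) (hq : 0 < q.re) (hr : 0 < r.re) : Pf r q ≠ 0 := by
  intro h
  rw [Quaternion.ext_iff] at h
  obtain ⟨h1, h2, h3, h4⟩ := h
  simp only [Pf, Quaternion.re_add, Quaternion.imI_add, Quaternion.imJ_add, Quaternion.imK_add,
    Quaternion.re_mul, Quaternion.imI_mul, Quaternion.imJ_mul, Quaternion.imK_mul,
    Quaternion.re_star, Quaternion.imI_star, Quaternion.imJ_star, Quaternion.imK_star,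
    Quaternion.re_zero, Quaternion.imI_zero, Quaternion.imJ_zero, Quaternion.imK_zero]
    at h1 h2 h3 h4
  have hI : r.imI = 0 := by nlinarith [sq_nonneg (q.re + r.re)]
  have hJ : r.imJ = 0 := by nlinarith [sq_nonneg (q.re + r.re)]
  have hK : r.imK = 0 := by nlinarith [sq_nonneg (q.re + r.re)]
  rw [hI, hJ, hK] at h1
  nlinarith [sq_nonneg (q.re + r.re), sq_nonneg q.imI, sq_nonneg q.imJ, sq_nonneg q.imK]

lemma hvv1 : (1 : ℍ[ℝ]) * star 1 = 1 := by simp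

lemma hvvI : qI * star qI = 1 := by
  ext <;>
    simp only [Quaternion.re_mul, Quaternion.imI_mul, Quaternion.imJ_mul, Quaternion.imK_mul,
      Quaternion.re_star, Quaternion.imI_star, Quaternion.imJ_star, Quaternion.imK_star,
      Quaternion.re_one, Quaternion.imI_one, Quaternion.imJ_one, Quaternion.imK_one] <;> simp only [qI] <;>
    norm_num

lemma hvvJ : qJ * star qJ = 1 := by
  ext <;>
    simp only [Quaternion.re_mul, Quaternion.imI_mul, Quaternion.imJ_mul, Quaternion.imK_mul,
      Quaternion.re_star, Quaternion.imI_star, Quaternion.imJ_star, Quaternion.imK_star,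
      Quaternion.re_one, Quaternion.imI_one, Quaternion.imJ_one, Quaternion.imK_one] <;> simp only [qJ] <;>
    norm_num

lemma hvvK : qK * star qK = 1 := by
  ext <;>
    simp only [Quaternion.re_mul, Quaternion.imI_mul, Quaternion.imJ_mul, Quaternion.imK_mul,
      Quaternion.re_star, Quaternion.imI_star, Quaternion.imJ_star, Quaternion.imK_star,
      Quaternion.re_one, Quaternion.imI_one, Quaternion.imJ_one, Quaternion.imK_one] <;> simp only [qK] <;>
    norm_num

lemma sum_ndd : Ndd 1 + Ndd qI + Ndd qJ + Ndd qK = -4 := by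
  ext <;>
    simp only [Ndd, Quaternion.re_add, Quaternion.imI_add, Quaternion.imJ_add,
      Quaternion.imK_add, Quaternion.re_mul, Quaternion.imI_mul, Quaternion.imJ_mul,
      Quaternion.imK_mul, Quaternion.re_star, Quaternion.imI_star, Quaternion.imJ_star,
      Quaternion.imK_star, Quaternion.re_one, Quaternion.imI_one, Quaternion.imJ_one,
      Quaternion.imK_one, Quaternion.re_neg, Quaternion.imI_neg, Quaternion.imJ_neg,
      Quaternion.imK_neg, four_re', four_imI', four_imJ', four_imK'] <;> simp only [qI, qJ, qK] <;>
    norm_num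

lemma sum_tt (r q : ℍ[ℝ]) :
    Pd r 1 q * Pd r 1 q + Pd r qI q * Pd r qI q + Pd r qJ q * Pd r qJ q + Pd r qK q * Pd r qK q
      = Pf r q + Pf r q + Pf r q + Pf r q := by
  ext <;>
    simp only [Pd, Pf, Quaternion.re_add, Quaternion.imI_add, Quaternion.imJ_add,
      Quaternion.imK_add, Quaternion.re_mul, Quaternion.imI_mul, Quaternion.imJ_mul,
      Quaternion.imK_mul, Quaternion.re_star, Quaternion.imI_star, Quaternion.imJ_star,
      Quaternion.imK_star, Quaternion.re_one, Quaternion.imI_one, Quaternion.imJ_one,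
      Quaternion.imK_one] <;> simp only [qI, qJ, qK] <;>
    ring

lemma sum_nt (r q : ℍ[ℝ]) :
    Nd r 1 q * Pd r 1 q + Nd r qI q * Pd r qI q + Nd r qJ q * Pd r qJ q + Nd r qK q * Pd r qK q
      = Nf r q + Nf r q + Nf r q + Nf r q := by
  ext <;>
    simp only [Pd, Nd, Nf, Quaternion.re_add, Quaternion.imI_add, Quaternion.imJ_add,
      Quaternion.imK_add, Quaternion.re_mul, Quaternion.imI_mul, Quaternion.imJ_mul,
      Quaternion.imK_mul, Quaternion.re_star, Quaternion.imI_star, Quaternion.imJ_star,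
      Quaternion.imK_star, Quaternion.re_one, Quaternion.imI_one, Quaternion.imJ_one,
      Quaternion.imK_one, two_re', two_imI', two_imJ', two_imK'] <;> simp only [qI, qJ, qK] <;>
    ring

lemma commPdPf (r q v : ℍ[ℝ]) (hv : v = 1 ∨ v = qI ∨ v = qJ ∨ v = qK) :
    Commute (Pd r v q) (Pf r q) := by
  rcases hv with h | h | h | h <;> subst h <;>
    (ext <;>
      simp only [Pd, Pf, Commute, SemiconjBy, Quaternion.re_add, Quaternion.imI_add,
        Quaternion.imJ_add, Quaternion.imK_add, Quaternion.re_mul, Quaternion.imI_mul,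
        Quaternion.imJ_mul, Quaternion.imK_mul, Quaternion.re_star, Quaternion.imI_star,
        Quaternion.imJ_star, Quaternion.imK_star, Quaternion.re_one, Quaternion.imI_one,
        Quaternion.imJ_one, Quaternion.imK_one] <;> simp -failIfUnchanged only [qI, qJ, qK] <;>
      ring)

end polyid

lemma commPdBf (r q v : ℍ[ℝ]) (hv : v = 1 ∨ v = qI ∨ v = qJ ∨ v = qK) :
    Pd r v q * Bf r q = Bf r q * Pd r v q :=
  ((commPdPf r q v hv).inv_right₀ : Commute (Pd r v q) (Pf r q)⁻¹)

/-! ### Canonical form of the second derivative -/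

lemma Kdd_canon (r v q : ℍ[ℝ]) (hvv : v * star v = 1)
    (hc : Pd r v q * Bf r q = Bf r q * Pd r v q) :
    Kdd r v q = Ndd v * (Bf r q * Bf r q)
      - 4 * ((Nd r v q * Pd r v q) * (Bf r q * (Bf r q * Bf r q)))
      + Nf r q * (6 * (Pd r v q * (Pd r v q * (Bf r q * (Bf r q * (Bf r q * Bf r q))))))
      - Nf r q * (4 * (Bf r q * (Bf r q * Bf r q))) := by
  set B := Bf r q with hB
  set t := Pd r v q with ht
  have hcs : B * t = t * B := hc.symm
  have hc' : ∀ x : ℍ[ℝ], B * (t * x) = t * (B * x) := fun x => by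
    rw [← mul_assoc, hcs, mul_assoc]
  rw [Kdd, Gdd, Gd, Pdd, hvv, one_add_one_eq_two]
  simp only [← ht, ← hB, neg_mul, mul_neg, neg_neg, neg_add, mul_add, add_mul, mul_assoc, hcs, hc']
  noncomm_ring

/-! ### Main theorem -/

/-- For `Re q > 0` and `Re r > 0`, the quaternion `D(q,r)` is nonzero and the Laplacian in `q`
of the half-space slice Bergman kernel satisfies the Bergman–Fueter identity
`Δ_q K(q,r) = −4 [D(q,r)⁻¹ + 2 K(q,r)] D(q,r)⁻¹`. -/
theorem bergmanFueter_half_space (q r : ℍ[ℝ]) (hq : 0 < q.re) (hr : 0 < r.re) :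
    D r q ≠ 0 ∧
    lap (Khalf r) q = -4 * ((D r q)⁻¹ + 2 * Khalf r q) * (D r q)⁻¹ := by
  have hPq : Pf r q ≠ 0 := Pf_ne_zero q r hq hr
  refine ⟨by rw [D_eq_P]; exact hPq, ?_⟩
  have hPB : Pf r q * Bf r q = 1 := mul_inv_cancel₀ hPq
  rw [lap, dd_dd_K r 1 q hPq, dd_dd_K r qI q hPq, dd_dd_K r qJ q hPq, dd_dd_K r qK q hPq]
  rw [Kdd_canon r 1 q hvv1 (commPdBf r q 1 (Or.inl rfl)),
    Kdd_canon r qI q hvvI (commPdBf r q qI (Or.inr (Or.inl rfl))),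
    Kdd_canon r qJ q hvvJ (commPdBf r q qJ (Or.inr (Or.inr (Or.inl rfl)))),
    Kdd_canon r qK q hvvK (commPdBf r q qK (Or.inr (Or.inr (Or.inr rfl))))]
  rw [D_eq_P, Khalf_eq]
  have hBdef : (Pf r q)⁻¹ = Bf r q := rfl
  rw [hBdef]
  set B := Bf r q with hB
  set N := Nf r q with hN
  have step1 :
      Ndd 1 * (B * B) - 4 * ((Nd r 1 q * Pd r 1 q) * (B * (B * B)))
          + N * (6 * (Pd r 1 q * (Pd r 1 q * (B * (B * (B * B))))))
          - N * (4 * (B * (B * B)))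
        + (Ndd qI * (B * B) - 4 * ((Nd r qI q * Pd r qI q) * (B * (B * B)))
          + N * (6 * (Pd r qI q * (Pd r qI q * (B * (B * (B * B))))))
          - N * (4 * (B * (B * B))))
        + (Ndd qJ * (B * B) - 4 * ((Nd r qJ q * Pd r qJ q) * (B * (B * B)))
          + N * (6 * (Pd r qJ q * (Pd r qJ q * (B * (B * (B * B))))))
          - N * (4 * (B * (B * B))))
        + (Ndd qK * (B * B) - 4 * ((Nd r qK q * Pd r qK q) * (B * (B * B)))
          + N * (6 * (Pd r qK q * (Pd r qK q * (B * (B * (B * B))))))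
          - N * (4 * (B * (B * B))))
      = (Ndd 1 + Ndd qI + Ndd qJ + Ndd qK) * (B * B)
        - 4 * ((Nd r 1 q * Pd r 1 q + Nd r qI q * Pd r qI q + Nd r qJ q * Pd r qJ q
            + Nd r qK q * Pd r qK q) * (B * (B * B)))
        + N * (6 * ((Pd r 1 q * Pd r 1 q + Pd r qI q * Pd r qI q + Pd r qJ q * Pd r qJ q
            + Pd r qK q * Pd r qK q) * (B * (B * (B * B)))))
        - N * (16 * (B * (B * B))) := by
    noncomm_ring
  rw [step1, sum_ndd, sum_nt, sum_tt]
  have hP4 : Pf r q * (B * (B * (B * B))) = B * (B * B) := by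
    rw [← mul_assoc, hB, hPB, one_mul]
  have h6 : N * (6 * ((Pf r q + Pf r q + Pf r q + Pf r q) * (B * (B * (B * B)))))
      = N * (24 * (B * (B * B))) := by
    rw [add_mul, add_mul, add_mul, hP4]
    noncomm_ring
  rw [h6]
  noncomm_ring

end
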